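/- If N is a strongly 2-absorbing second submodule of M and K a submodule of M with N ⊄ K, then either (K :_R N) is a prime ideal of R, or there exists a ∈ R such that (K :_R a•N) is a prime ideal of R. -/

import Mathlib

/-!
The colon ideal `I = (K :_R N)` is 2-absorbing: for `a * b * c ∈ I`, apply the defining property
of `N` to the ideals `(a)`, `(b)` and the submodule `{m | c • m ∈ K}`. Since
`(K :_R a • N) = (I : a)`, it remains to see that a proper 2-absorbing ideal `I` which is not prime
has a prime colon `(I : a)`. Pick `x, y ∉ I` with `x * y ∈ I`. If `x * x ∈ I` then `(I : x)` is
prime: for `r * s ∈ I`, apply 2-absorption to `r * (s + x) * x ∈ I`. If neither `x * x` nor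
`y * y` lies in `I`, then `(I : x)` is prime: for `r * s ∈ I` with `r * x, s * x ∉ I`, the products
`r * x * (s + y)` and `s * x * (r + y)` give `r * y, s * y ∈ I`, and then
`(r + y) * (s + y) * x ∈ I` forces `y * y ∈ I`. This avoids Badawi's description of `√I`.
-/

open Pointwise

/-- A nonzero submodule `N` is strongly 2-absorbing second (ideal form): for all
ideals `I J` of `R` and submodules `K` of `M` with `I • J • N ⊆ K`, either
`I • N ⊆ K` or `J • N ⊆ K` or `I * J ⊆ Ann(N)`. -/
def IsStrongly2AbsorbingSecond {R M : Type*} [CommRing R] [AddCommGroup M] [Module R M]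
    (N : Submodule R M) : Prop :=
  N ≠ ⊥ ∧ ∀ (I J : Ideal R) (K : Submodule R M), I • J • N ≤ K →
    I • N ≤ K ∨ J • N ≤ K ∨ I * J ≤ N.annihilator

namespace Submodule

variable {R M : Type*} [CommSemiring R] [AddCommMonoid M] [Module R M]

theorem colon_smul_set (K : Submodule R M) (a : R) (S : Set M) :
    K.colon (a • S) = (K.colon S).colon {a} := by
  ext r
  simp [mem_colon, Set.mem_smul_set, smul_smul]

theorem mem_colon_comap_lsmul {K : Submodule R M} {c r : R} {S : Set M} :
    r ∈ (K.comap (LinearMap.lsmul R M c)).colon S ↔ r * c ∈ K.colon S := by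
  simp [mem_colon, smul_smul]

theorem annihilator_le_colon (N K : Submodule R M) : N.annihilator ≤ K.colon N := by
  rw [← bot_colon]
  exact colon_mono bot_le le_rfl

end Submodule

structure Ideal.IsTwoAbsorbing {R : Type*} [CommRing R] (I : Ideal R) : Prop where
  ne_top : I ≠ ⊤
  mul_mem_or : ∀ {a b c : R}, a * b * c ∈ I → a * b ∈ I ∨ a * c ∈ I ∨ b * c ∈ I

namespace Ideal.IsTwoAbsorbing

variable {R : Type*} [CommRing R] {I : Ideal R}

theorem isPrime_colon_of_mul_self_mem (hI : I.IsTwoAbsorbing) {c : R} (hc : c ∉ I)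
    (hcc : c * c ∈ I) : (I.colon {c}).IsPrime := by
  refine ⟨by simpa using hc, fun {r s} hrsc => ?_⟩
  simp only [Submodule.mem_colon_singleton, smul_eq_mul] at hrsc ⊢
  rcases hI.mul_mem_or hrsc with hrs | hrc | hsc
  · have hrsc' : r * (s + c) * c ∈ I := by
      convert add_mem (I.mul_mem_right c hrs) (I.mul_mem_left r hcc) using 1; ring
    rcases hI.mul_mem_or hrsc' with h | hrc | h
    · left; convert sub_mem h hrs using 1; ring
    · exact .inl hrc
    · right; convert sub_mem h hcc using 1; ring
  · exact .inl hrc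
  · exact .inr hsc

theorem isPrime_colon_of_mul_mem (hI : I.IsTwoAbsorbing) {x y : R} (hx : x ∉ I)
    (hyy : y * y ∉ I) (hxy : x * y ∈ I) : (I.colon {x}).IsPrime := by
  refine ⟨by simpa using hx, fun {r s} hrsx => ?_⟩
  simp only [Submodule.mem_colon_singleton, smul_eq_mul] at hrsx ⊢
  rcases hI.mul_mem_or hrsx with hrs | hrx | hsx
  · by_contra! ⟨hrx, hsx⟩
    have mul_y_mem : ∀ {r s : R}, r * s ∈ I → r * x ∉ I → s * x ∉ I → r * y ∈ I := by
      intro r s hrs hrx hsx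
      have : r * x * (s + y) ∈ I := by
        convert add_mem (I.mul_mem_right x hrs) (I.mul_mem_right r hxy) using 1; ring
      rcases hI.mul_mem_or this with h | h | h
      · exact absurd h hrx
      · convert sub_mem h hrs using 1; ring
      · exact absurd (by convert sub_mem h hxy using 1; ring) hsx
    have hry := mul_y_mem hrs hrx hsx
    have hsy := mul_y_mem (mul_comm r s ▸ hrs) hsx hrx
    have : (r + y) * (s + y) * x ∈ I := by
      convert add_mem (I.mul_mem_right x hrs) (I.mul_mem_left (r + s + y) hxy) using 1; ring
    rcases hI.mul_mem_or this with h | h | h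
    · exact hyy (by convert sub_mem (sub_mem (sub_mem h hrs) hry) hsy using 1; ring)
    · exact hrx (by convert sub_mem h hxy using 1; ring)
    · exact hsx (by convert sub_mem h hxy using 1; ring)
  · exact .inl hrx
  · exact .inr hsx

theorem isPrime_or_exists_isPrime_colon (hI : I.IsTwoAbsorbing) :
    I.IsPrime ∨ ∃ a : R, (I.colon {a}).IsPrime := by
  by_cases hP : I.IsPrime
  · exact .inl hP
  obtain ⟨x, hx, y, hy, hxy⟩ := (not_isPrime_iff.mp hP).resolve_left hI.ne_top
  right
  by_cases hxx : x * x ∈ I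
  · exact ⟨x, hI.isPrime_colon_of_mul_self_mem hx hxx⟩
  by_cases hyy : y * y ∈ I
  · exact ⟨y, hI.isPrime_colon_of_mul_self_mem hy hyy⟩
  exact ⟨x, hI.isPrime_colon_of_mul_mem hx hyy hxy⟩

end Ideal.IsTwoAbsorbing

namespace IsStrongly2AbsorbingSecond

variable {R M : Type*} [CommRing R] [AddCommGroup M] [Module R M] {N : Submodule R M}

theorem mem_colon_or {a b : R} {L : Submodule R M} (hN : IsStrongly2AbsorbingSecond N)
    (h : a * b ∈ L.colon N) : a ∈ L.colon N ∨ b ∈ L.colon N ∨ a * b ∈ N.annihilator := by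
  simp only [Submodule.mem_colon_iff_le, ← Submodule.ideal_span_singleton_smul] at h ⊢
  rw [← Ideal.span_singleton_mul_span_singleton, Submodule.mul_smul] at h
  refine (hN.2 _ _ L h).imp_right (Or.imp_right fun hab => hab ?_)
  exact Ideal.mul_mem_mul (Ideal.mem_span_singleton_self a) (Ideal.mem_span_singleton_self b)

theorem colon_isTwoAbsorbing (hN : IsStrongly2AbsorbingSecond N) {K : Submodule R M}
    (hNK : ¬ N ≤ K) : (K.colon N).IsTwoAbsorbing where
  ne_top := by simpa using hNK
  mul_mem_or {a b c} habc := by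
    open Submodule in
    rcases hN.mem_colon_or (mem_colon_comap_lsmul.mpr habc) with hac | hbc | hab
    · exact .inr (.inl (mem_colon_comap_lsmul.mp hac))
    · exact .inr (.inr (mem_colon_comap_lsmul.mp hbc))
    · exact .inl (Submodule.annihilator_le_colon N K hab)

end IsStrongly2AbsorbingSecond

theorem colon_prime_or_exists
    {R M : Type*} [CommRing R] [AddCommGroup M] [Module R M]
    (N : Submodule R M) (hN : IsStrongly2AbsorbingSecond N)
    (K : Submodule R M) (hNK : ¬ N ≤ K) :
    (K.colon N).IsPrime ∨ ∃ a : R, (K.colon (a • N)).IsPrime := by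
  simpa only [Submodule.colon_smul_set] using
    (hN.colon_isTwoAbsorbing hNK).isPrime_or_exists_isPrime_colon
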